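/- arXiv:1605.08945 — 2 statements merged into one kernel-verified Lean document; each statement's English description precedes it below -/
import Mathlib

section
/- Let G_• be a filtered group. Suppose (g_ω)_{ω ∈ {0,1}^k \ {(1,...,1)}} is a configuration in G such that the restriction to every lower face of codimension 1 lies in HK^{k-1}(G_•). Then there exists g ∈ G such that setting g_{(1,...,1)} = g yields an element of HK^k(G_•). -/
open Subgroup

/-- A filtration on a group `G`: a chain `G = G₀ ⊇ G₁ ⊇ ...` of subgroups with
`[Gᵢ, Gⱼ] ⊆ G_{i+j}` for all `i j`. -/
structure IsGrpFiltration {G : Type*} [Group G] (Gf : ℕ → Subgroup G) : Prop where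
  top : Gf 0 = ⊤
  mono : ∀ i, Gf (i + 1) ≤ Gf i
  comm : ∀ i j, ⁅Gf i, Gf j⁆ ≤ Gf (i + j)

/-- The top vertex `(1,…,1)` of the discrete cube `{0,1}^k`. -/
def topVert (k : ℕ) : Fin k → Bool := fun _ => true

/-- The configuration `[x]_{F_S}`: equal to `x` on the upper face `F_S = {ω : ω ⊇ S}`
and the identity elsewhere. -/
def upperFaceConfig {G : Type*} [Group G] {k : ℕ} (S : Finset (Fin k)) (x : G) :
    (Fin k → Bool) → G :=
  fun ω => if ∀ i ∈ S, ω i = true then x else 1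

/-- The Host–Kra cube group `HK^k(G_•)`: the subgroup of `G^{{0,1}^k}` generated by the
configurations `[x]_{F_S}` with `x ∈ G_{|S|}`. -/
def hostKra {G : Type*} [Group G] (Gf : ℕ → Subgroup G) (k : ℕ) :
    Subgroup ((Fin k → Bool) → G) :=
  Subgroup.closure { c | ∃ (S : Finset (Fin k)) (x : G), x ∈ Gf S.card ∧ c = upperFaceConfig S x }

/-!
Split the cube along the first coordinate, `c = (c₀, c₁)`. Lifting generators shows that
`(c₀, c₀ d)` lies in `HK^{n+1}(G_•)` whenever `c₀ ∈ HK^n(G_•)` and `d ∈ HK^n(G_{•+1})`;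
conversely `c ∈ HK^{n+1}(G_•)` forces `c₀⁻¹ c₁ ∈ HK^n(G_{•+1})`, because conjugating
`[y]_{F_T}` by `[x]_{F_S}` multiplies it by a generator on `F_{S ∪ T}`, so `HK^n(G_•)` normalises
`HK^n(G_{•+1})`. For the corner `λ`, `c₀` is a lower face, and the remaining lower faces of `λ`
say that every lower face of the corner `c₀⁻¹ c₁` lies in `HK^{n-1}(G_{•+1})`. Completing that
corner by induction on `n` and gluing gives the result. The shift `i ↦ G_{i+1}` keeps
antitonicity and `[G_i, G_j] ≤ G_{i+j}` but not `G₀ = G`, so the induction is run for such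
sequences.
-/

open Finset
open scoped commutatorElement

def precompMonoidHom {α β : Type*} (M : Type*) [Monoid M] (f : α → β) : (β → M) →* (α → M) :=
  MonoidHom.pi fun a => Pi.evalMonoidHom (fun _ => M) (f a)

@[simp]
lemma precompMonoidHom_apply {α β M : Type*} [Monoid M] (f : α → β) (c : β → M) (a : α) :
    precompMonoidHom M f c a = c (f a) := rfl

lemma topVert_succ (n : ℕ) : topVert (n + 1) = Fin.cons true (topVert n) := by
  funext i
  cases i using Fin.cases <;> rfl

lemma Finset.card_eq_ite_zero_add_card_succ {n : ℕ} (S : Finset (Fin (n + 1))) :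
    #S = (if 0 ∈ S then 1 else 0) + #{j : Fin n | j.succ ∈ S} := by
  simpa using Fin.card_filter_univ_succ' (· ∈ S)

section UpperFaceConfig

variable {G : Type*} [Group G]

lemma upperFaceConfig_inv {k : ℕ} (S : Finset (Fin k)) (x : G) :
    (upperFaceConfig S x)⁻¹ = upperFaceConfig S x⁻¹ := by
  funext ω
  simp only [upperFaceConfig, Pi.inv_apply]
  split_ifs <;> simp

lemma upperFaceConfig_conj {k : ℕ} (S T : Finset (Fin k)) (x y : G) :
    upperFaceConfig S x * upperFaceConfig T y * (upperFaceConfig S x)⁻¹ =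
      upperFaceConfig T y * upperFaceConfig (S ∪ T) ⁅y⁻¹, x⁆ := by
  funext ω
  simp only [upperFaceConfig, Pi.mul_apply, Pi.inv_apply, Finset.mem_union, or_imp, forall_and]
  split_ifs <;> simp_all [commutatorElement_def, mul_assoc]

lemma upperFaceConfig_cons_false {n : ℕ} (S : Finset (Fin (n + 1))) (x : G) :
    (fun ω => upperFaceConfig S x (Fin.cons false ω)) =
      if 0 ∈ S then 1 else upperFaceConfig {j : Fin n | j.succ ∈ S} x := by
  funext ω
  split_ifs with h
  · simp only [upperFaceConfig, Pi.one_apply, ite_eq_right_iff]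
    exact fun hS => absurd (hS 0 h) (by simp)
  · simp [upperFaceConfig, Fin.forall_fin_succ, h]

lemma upperFaceConfig_cons_true {n : ℕ} (S : Finset (Fin (n + 1))) (x : G) :
    (fun ω => upperFaceConfig S x (Fin.cons true ω)) =
      upperFaceConfig {j : Fin n | j.succ ∈ S} x := by
  funext ω
  simp [upperFaceConfig, Fin.forall_fin_succ]

end UpperFaceConfig

section HostKra

variable {G : Type*} [Group G]

lemma hostKra_le_comap {m k : ℕ} {Gf Hf : ℕ → Subgroup G}
    (φ : ((Fin m → Bool) → G) →* ((Fin k → Bool) → G))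
    (hφ : ∀ (S : Finset (Fin m)) (x : G), x ∈ Gf #S → φ (upperFaceConfig S x) ∈ hostKra Hf k) :
    hostKra Gf m ≤ (hostKra Hf k).comap φ :=
  closure_le _ |>.2 <| by
    rintro _ ⟨S, x, hx, rfl⟩
    exact hφ S x hx

lemma upperFaceConfig_mem_hostKra {k : ℕ} {Gf : ℕ → Subgroup G} {S : Finset (Fin k)} {x : G}
    (hx : x ∈ Gf #S) : upperFaceConfig S x ∈ hostKra Gf k :=
  subset_closure ⟨S, x, hx, rfl⟩

variable {n : ℕ} {Gf : ℕ → Subgroup G}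

variable (G n) in
def lowerHalf : ((Fin (n + 1) → Bool) → G) →* ((Fin n → Bool) → G) :=
  precompMonoidHom G (Fin.cons (α := fun _ => Bool) false)

variable (G n) in
def upperHalf : ((Fin (n + 1) → Bool) → G) →* ((Fin n → Bool) → G) :=
  precompMonoidHom G (Fin.cons (α := fun _ => Bool) true)

lemma hostKra_le_comap_lowerHalf : hostKra Gf (n + 1) ≤ (hostKra Gf n).comap (lowerHalf G n) := by
  refine hostKra_le_comap _ fun S x hx => ?_
  change (fun ω => upperFaceConfig S x (Fin.cons false ω)) ∈ hostKra Gf n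
  rw [upperFaceConfig_cons_false]
  split_ifs with h
  · exact one_mem _
  · refine upperFaceConfig_mem_hostKra ?_
    simpa [card_eq_ite_zero_add_card_succ S, h] using hx

lemma hostKra_le_comap_tail :
    hostKra Gf n ≤ (hostKra Gf (n + 1)).comap (precompMonoidHom G Fin.tail) := by
  refine hostKra_le_comap _ fun T x hx => ?_
  convert upperFaceConfig_mem_hostKra (S := T.map (Fin.succEmb n)) (by rwa [card_map])
  funext ω
  simp only [upperFaceConfig, precompMonoidHom_apply, Fin.tail, forall_mem_map, Fin.coe_succEmb]
  congr

def extendUpper : ((Fin n → Bool) → G) →* ((Fin (n + 1) → Bool) → G) where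
  toFun d ω := if ω 0 = true then d (Fin.tail ω) else 1
  map_one' := by
    funext ω
    simp
  map_mul' c d := by
    funext ω
    simp only [Pi.mul_apply]
    split_ifs <;> simp

lemma hostKra_shift_le_comap_extendUpper :
    hostKra (fun i => Gf (i + 1)) n ≤ (hostKra Gf (n + 1)).comap extendUpper := by
  refine hostKra_le_comap _ fun T x hx => ?_
  have h0 : (0 : Fin (n + 1)) ∉ T.map (Fin.succEmb n) := by simp [Fin.succ_ne_zero]
  convert upperFaceConfig_mem_hostKra (S := insert 0 (T.map (Fin.succEmb n)))
    (by rwa [card_insert_of_notMem h0, card_map])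
  funext ω
  simp only [extendUpper, MonoidHom.coe_mk, OneHom.coe_mk, upperFaceConfig, Fin.tail, mem_insert,
    Finset.mem_map, Fin.coe_succEmb, forall_eq_or_imp, forall_exists_index, and_imp,
    forall_apply_eq_imp_iff₂, ite_and]
  congr

end HostKra

section Filtered

variable {G : Type*} [Group G] {Gf : ℕ → Subgroup G}

lemma antitone_shift (hanti : Antitone Gf) : Antitone fun i => Gf (i + 1) :=
  fun _ _ h => hanti (Nat.succ_le_succ h)

lemma commutator_le_shift (hanti : Antitone Gf) (hcomm : ∀ i j, ⁅Gf i, Gf j⁆ ≤ Gf (i + j))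
    (i j : ℕ) : ⁅Gf (i + 1), Gf (j + 1)⁆ ≤ Gf (i + j + 1) :=
  (hcomm _ _).trans (hanti (by omega))

lemma hostKra_le_normalizer_hostKra_shift (hanti : Antitone Gf)
    (hcomm : ∀ i j, ⁅Gf i, Gf j⁆ ≤ Gf (i + j)) {k : ℕ} :
    hostKra Gf k ≤ normalizer (hostKra (fun i => Gf (i + 1)) k : Set ((Fin k → Bool) → G)) := by
  have hgen : ∀ (S : Finset (Fin k)) (x : G), x ∈ Gf #S → ∀ c ∈ hostKra (fun i => Gf (i + 1)) k,
      upperFaceConfig S x * c * (upperFaceConfig S x)⁻¹ ∈ hostKra (fun i => Gf (i + 1)) k := by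
    intro S x hx c hc
    suffices h : hostKra (fun i => Gf (i + 1)) k ≤ (hostKra (fun i => Gf (i + 1)) k).comap
        (MulAut.conj (upperFaceConfig S x)).toMonoidHom by
      simpa using h hc
    refine hostKra_le_comap _ fun T y hy => ?_
    rw [MulEquiv.coe_toMonoidHom, MulAut.conj_apply, upperFaceConfig_conj]
    refine mul_mem (upperFaceConfig_mem_hostKra hy) (upperFaceConfig_mem_hostKra ?_)
    have hz : ⁅y⁻¹, x⁆ ∈ Gf (#T + 1 + #S) :=
      hcomm _ _ (commutator_mem_commutator (inv_mem hy) hx)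
    exact hanti (by have := card_union_le S T; omega) hz
  refine le_normalizer_iff.2 fun g hg => ?_
  induction hg using closure_induction'' with
  | mem _ h =>
    obtain ⟨S, x, hx, rfl⟩ := h
    exact hgen S x hx
  | inv_mem _ h =>
    obtain ⟨S, x, hx, rfl⟩ := h
    rw [upperFaceConfig_inv]
    exact hgen S x⁻¹ (inv_mem hx)
  | one => simp
  | mul g h _ _ hg hh =>
    intro c hc
    simpa only [mul_assoc, mul_inv_rev] using hg _ (hh c hc)

lemma consFalse_inv_mul_consTrue_mem_hostKra_shift (hanti : Antitone Gf)
    (hcomm : ∀ i j, ⁅Gf i, Gf j⁆ ≤ Gf (i + j)) {n : ℕ} {c : (Fin (n + 1) → Bool) → G}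
    (hc : c ∈ hostKra Gf (n + 1)) :
    (fun ω => (c (Fin.cons false ω))⁻¹ * c (Fin.cons true ω)) ∈ hostKra (fun i => Gf (i + 1)) n := by
  have hnormal := hostKra_le_normalizer_hostKra_shift hanti hcomm (k := n)
  change (lowerHalf G n c)⁻¹ * upperHalf G n c ∈ hostKra (fun i => Gf (i + 1)) n
  induction hc using closure_induction with
  | mem _ h =>
    obtain ⟨S, x, hx, rfl⟩ := h
    change (fun ω => upperFaceConfig S x (Fin.cons false ω))⁻¹ *
      (fun ω => upperFaceConfig S x (Fin.cons true ω)) ∈ hostKra (fun i => Gf (i + 1)) n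
    rw [upperFaceConfig_cons_false, upperFaceConfig_cons_true]
    split_ifs with h
    · rw [inv_one, one_mul]
      refine upperFaceConfig_mem_hostKra ?_
      simpa [card_eq_ite_zero_add_card_succ S, h, add_comm] using hx
    · rw [inv_mul_cancel]
      exact one_mem _
  | one => simp
  | mul c d hc hd hcq hdq =>
    have hL := le_normalizer_iff.1 hnormal _ (inv_mem (hostKra_le_comap_lowerHalf hd)) _ hcq
    convert mul_mem hL hdq using 1
    simp only [map_mul]
    group
  | inv c hc hcq =>
    have hL := le_normalizer_iff.1 hnormal _ (hostKra_le_comap_lowerHalf hc) _ (inv_mem hcq)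
    convert hL using 1
    simp only [map_inv]
    group

end Filtered

section CornerCompletion

variable {G : Type*} [Group G]

lemma exists_hostKra_eqOn_of_halves {n : ℕ} {Gf : ℕ → Subgroup G}
    {lam : (Fin (n + 1) → Bool) → G} (hlow : (fun ω => lam (Fin.cons false ω)) ∈ hostKra Gf n)
    {d : (Fin n → Bool) → G} (hd : d ∈ hostKra (fun i => Gf (i + 1)) n)
    (hdlam : ∀ ω, ω ≠ topVert n → d ω = (lam (Fin.cons false ω))⁻¹ * lam (Fin.cons true ω)) :
    ∃ c ∈ hostKra Gf (n + 1), ∀ ω, ω ≠ topVert (n + 1) → c ω = lam ω := by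
  refine ⟨precompMonoidHom G Fin.tail (lowerHalf G n lam) * extendUpper d,
    mul_mem (hostKra_le_comap_tail hlow) (hostKra_shift_le_comap_extendUpper hd), ?_⟩
  intro ω hω
  induction ω using Fin.consCases with
  | cons b ω =>
  cases b with
  | false => simp [lowerHalf, extendUpper]
  | true =>
    have hω' : ω ≠ topVert n := fun h => hω (by rw [h, topVert_succ])
    simp [lowerHalf, extendUpper, hdlam ω hω']

theorem exists_hostKra_eqOn_of_faces {n : ℕ} {Gf : ℕ → Subgroup G} (hanti : Antitone Gf)
    (hcomm : ∀ i j, ⁅Gf i, Gf j⁆ ≤ Gf (i + j)) {lam : (Fin (n + 1) → Bool) → G}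
    (hfaces : ∀ i : Fin (n + 1),
      (fun ω : Fin n → Bool => lam (i.insertNth false ω)) ∈ hostKra Gf n) :
    ∃ c ∈ hostKra Gf (n + 1), ∀ ω, ω ≠ topVert (n + 1) → c ω = lam ω := by
  induction n generalizing Gf with
  | zero =>
    exact exists_hostKra_eqOn_of_halves (by simpa using hfaces 0) (one_mem _)
      fun ω hω => absurd (Subsingleton.elim ω _) hω
  | succ m ih =>
    obtain ⟨d, hd, hdlam⟩ := ih (antitone_shift hanti) (commutator_le_shift hanti hcomm)
      (lam := fun ω => (lam (Fin.cons false ω))⁻¹ * lam (Fin.cons true ω)) fun j => by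
        simpa using consFalse_inv_mul_consTrue_mem_hostKra_shift hanti hcomm (hfaces j.succ)
    exact exists_hostKra_eqOn_of_halves (by simpa using hfaces 0) hd hdlam

end CornerCompletion

/-- (Corner completion in `HK^k(G_•)`.)  If a configuration on
`{0,1}^{n+1} ∖ {(1,…,1)}` restricts to a Host–Kra `n`-cube on every lower codimension-1
face, then its value at the top vertex can be chosen so as to yield an element of
`HK^{n+1}(G_•)`. -/
theorem hostKra_corner_completion {G : Type*} [Group G] (Gf : ℕ → Subgroup G)
    (hf : IsGrpFiltration Gf) (n : ℕ) (lam : (Fin (n + 1) → Bool) → G)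
    (hfaces : ∀ i : Fin (n + 1),
      (fun ω : Fin n → Bool => lam (i.insertNth false ω)) ∈ hostKra Gf n) :
    ∃ g : G, (fun ω => if ω = topVert (n + 1) then g else lam ω) ∈ hostKra Gf (n + 1) := by
  obtain ⟨c, hc, hclam⟩ :=
    exists_hostKra_eqOn_of_faces (antitone_nat_of_succ_le hf.mono) hf.comm hfaces
  refine ⟨c (topVert (n + 1)), ?_⟩
  convert hc using 1
  funext ω
  split_ifs with h
  · rw [h]
  · exact (hclam ω h).symm
end

section
/- Let f : X → Y be a fibration between cubespaces, where X has s-uniqueness. Then Y has s-uniqueness: if x, y ∈ Y and the configuration on {0,1}^s equal to x at all vertices except the top vertex and y at the top vertex lies in C^s(Y), then x = y. -/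
/-- A morphism of discrete cubes `{0,1}^k → {0,1}^ℓ`: each coordinate function is
identically `0`, identically `1`, equal to `ω_j`, or equal to `1 - ω_j`. -/
def IsCubeMorphism {k l : ℕ} (ρ : (Fin k → Bool) → (Fin l → Bool)) : Prop :=
  ∀ i : Fin l, (∀ ω, ρ ω i = false) ∨ (∀ ω, ρ ω i = true) ∨
    (∃ j, ∀ ω, ρ ω i = ω j) ∨ (∃ j, ∀ ω, ρ ω i = !(ω j))

/-- A cubespace: a set `X` with cube sets `C^k(X) ⊆ X^{{0,1}^k}`, with `C^0(X) = X`,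
closed under precomposition with morphisms of discrete cubes. -/
structure Cubespace (X : Type*) where
  C : ∀ k : ℕ, Set ((Fin k → Bool) → X)
  C_zero : C 0 = Set.univ
  C_morph : ∀ {k l : ℕ} (ρ : (Fin k → Bool) → (Fin l → Bool)),
    IsCubeMorphism ρ → ∀ c ∈ C l, (c ∘ ρ) ∈ C k

/-- An `(n+1)`-corner: a configuration whose restriction to every lower
codimension-1 face is an `n`-cube (the value at the top vertex is irrelevant). -/
def IsCubeCorner {X : Type*} (CS : Cubespace X) (n : ℕ) (lam : (Fin (n + 1) → Bool) → X) : Prop :=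
  ∀ i : Fin (n + 1), (fun ω : Fin n → Bool => lam (i.insertNth false ω)) ∈ CS.C n

/-- `(n+1)`-completion: every `(n+1)`-corner can be completed to an `(n+1)`-cube. -/
def HasCompletion {X : Type*} (CS : Cubespace X) (n : ℕ) : Prop :=
  ∀ lam : (Fin (n + 1) → Bool) → X, IsCubeCorner CS n lam →
    ∃ x : X, (fun ω => if ω = topVert (n + 1) then x else lam ω) ∈ CS.C (n + 1)

/-- `k`-uniqueness: two `k`-cubes agreeing at all vertices except the top vertex are equal. -/
def HasUniqueness {X : Type*} (CS : Cubespace X) (k : ℕ) : Prop :=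
  ∀ c ∈ CS.C k, ∀ c' ∈ CS.C k, (∀ ω, ω ≠ topVert k → c ω = c' ω) → c = c'

/-- The glueing property: two `(n+1)`-cubes agreeing along a common codimension-1 face
can be glued to form another `(n+1)`-cube. -/
def HasGlueing {X : Type*} (CS : Cubespace X) : Prop :=
  ∀ (n : ℕ) (c c' : (Fin (n + 1) → Bool) → X), c ∈ CS.C (n + 1) → c' ∈ CS.C (n + 1) →
    (∀ ω : Fin n → Bool, c (Fin.snoc ω true) = c' (Fin.snoc ω false)) →
    (fun ω : Fin (n + 1) → Bool => if ω (Fin.last n) = true then c' ω else c ω) ∈ CS.C (n + 1)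

/-- A cubespace morphism: maps `k`-cubes to `k`-cubes for every `k`. -/
def IsMorphism {X Y : Type*} (CX : Cubespace X) (CY : Cubespace Y) (f : X → Y) : Prop :=
  ∀ k : ℕ, ∀ c ∈ CX.C k, (fun ω => f (c ω)) ∈ CY.C k

/-- A fibration: a cubespace morphism such that every corner of `X` lying over
(all but the top vertex of) a cube of `Y` can be completed to a cube of `X`
mapping onto that cube.  (The `k = 0` case of corner completion is surjectivity.) -/
def IsFibration {X Y : Type*} (CX : Cubespace X) (CY : Cubespace Y) (f : X → Y) : Prop :=
  IsMorphism CX CY f ∧ Function.Surjective f ∧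
  ∀ (n : ℕ) (lam : (Fin (n + 1) → Bool) → X) (c : (Fin (n + 1) → Bool) → Y),
    IsCubeCorner CX n lam → c ∈ CY.C (n + 1) →
    (∀ ω, ω ≠ topVert (n + 1) → f (lam ω) = c ω) →
    ∃ x : X, f x = c (topVert (n + 1)) ∧
      (fun ω => if ω = topVert (n + 1) then x else lam ω) ∈ CX.C (n + 1)

/-!
Lift `x` to some `a`, view the constant configuration at `a` as a corner over the given cube of
`Y`, and complete it by the fibration property to a cube of `X` with top vertex some `b` over `y`.
This cube agrees with the constant cube at `a` off the top vertex, so `s`-uniqueness in `X`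
forces `b = a`, whence `y = f b = f a = x`.
-/

namespace Cubespace

variable {X : Type*} (CS : Cubespace X)

theorem const_mem (k : ℕ) (a : X) : (fun _ : Fin k → Bool => a) ∈ CS.C k :=
  CS.C_morph (k := k) (l := 0) (fun _ => Fin.elim0) (fun i => i.elim0) (fun _ => a)
    (CS.C_zero ▸ Set.mem_univ _)

theorem isCubeCorner_const (n : ℕ) (a : X) : IsCubeCorner CS n (fun _ => a) :=
  fun _ => CS.const_mem n a

end Cubespace

theorem HasUniqueness.eq_of_mem {X : Type*} {CS : Cubespace X} {s : ℕ} (hX : HasUniqueness CS s)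
    {a b : X} (h : (fun ω : Fin s → Bool => if ω = topVert s then b else a) ∈ CS.C s) :
    a = b := by
  have hconst := hX _ (CS.const_mem s a) _ h fun ω hω => by simp only [hω, if_false]
  simpa using congrFun hconst (topVert s)

theorem IsFibration.exists_lift_of_mem {X Y : Type*} {CX : Cubespace X} {CY : Cubespace Y}
    {f : X → Y} (hf : IsFibration CX CY f) {s : ℕ} {x y : Y}
    (hc : (fun ω : Fin s → Bool => if ω = topVert s then y else x) ∈ CY.C s) :
    ∃ a b : X, f a = x ∧ f b = y ∧
      (fun ω : Fin s → Bool => if ω = topVert s then b else a) ∈ CX.C s := by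
  obtain ⟨-, hsurj, hlift⟩ := hf
  obtain ⟨a, rfl⟩ := hsurj x
  cases s with
  | zero =>
    obtain ⟨b, rfl⟩ := hsurj y
    exact ⟨a, b, rfl, rfl, CX.C_zero ▸ Set.mem_univ _⟩
  | succ n =>
    obtain ⟨b, hb, hcube⟩ := hlift n (fun _ => a) _ (CX.isCubeCorner_const n a) hc
      fun ω hω => by simp only [hω, if_false]
    exact ⟨a, b, rfl, by simpa using hb, hcube⟩

/-- If `f : X → Y` is a fibration and `X` has `s`-uniqueness, then `Y` has
`s`-uniqueness: if the configuration equal to `x` at all vertices except the top vertex and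
`y` at the top vertex is an `s`-cube of `Y`, then `x = y`. -/
theorem fibration_image_uniqueness {X Y : Type*} (CX : Cubespace X) (CY : Cubespace Y)
    (f : X → Y) (hf : IsFibration CX CY f) (s : ℕ) (hX : HasUniqueness CX s)
    (x y : Y)
    (hc : (fun ω : Fin s → Bool => if ω = topVert s then y else x) ∈ CY.C s) :
    x = y := by
  obtain ⟨a, b, rfl, rfl, hcube⟩ := hf.exists_lift_of_mem hc
  exact congrArg f (hX.eq_of_mem hcube)
end
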